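/- Let B ⊆ ℝ^d be a measurable set with 0 < |B| < ∞ (Lebesgue measure), and let B_1, …, B_m (m ≥ 2) be measurable subsets of B such that B = B_1 ∪ ⋯ ∪ B_m, |B_ℓ| > 0 for all ℓ, and |B_{ℓ_1} ∩ B_{ℓ_2}| = 0 for ℓ_1 ≠ ℓ_2. Set γ_ℓ = χ_{B_ℓ}/√|B_ℓ|, b_ℓ = |B_ℓ|/|B|, and for 1 ≤ ℓ_1 < ℓ_2 ≤ m define ψ^{(ℓ_1,ℓ_2)} = √(b_{ℓ_2}) γ_{ℓ_1} − √(b_{ℓ_1}) γ_{ℓ_2} ∈ L²(ℝ^d). Then for every f in the linear span W_B of {ψ^{(ℓ_1,ℓ_2)} : 1 ≤ ℓ_1 < ℓ_2 ≤ m} one has f = Σ_{1≤ℓ_1<ℓ_2≤m} ⟨f, ψ^{(ℓ_1,ℓ_2)}⟩ ψ^{(ℓ_1,ℓ_2)}; that is, Ψ_B = {ψ^{(ℓ_1,ℓ_2)}} is a tight frame (with frame constant 1) for W_B. -/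

import Mathlib

open MeasureTheory

/-- `γ_C = χ_C / √|C|`. -/
noncomputable def gammaFn {d : ℕ} (C : Set (Fin d → ℝ)) : (Fin d → ℝ) → ℝ :=
  C.indicator fun _ => (Real.sqrt (volume C).toReal)⁻¹

/-- `ψ^{(C,C')} = √(|C'|/|B|) γ_C − √(|C|/|B|) γ_{C'}` for sub-blocks `C, C'` of `B`. -/
noncomputable def psiFn {d : ℕ} (B C C' : Set (Fin d → ℝ)) : (Fin d → ℝ) → ℝ :=
  fun x =>
    Real.sqrt ((volume C').toReal / (volume B).toReal) * gammaFn C x -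
      Real.sqrt ((volume C).toReal / (volume B).toReal) * gammaFn C' x

/-!
The `γ_ℓ` are orthonormal and, since `∑ b_ℓ = 1`, `s = (√b_ℓ)_ℓ` is a unit vector. Every
`f ∈ W_B` is `∑ c_ℓ γ_ℓ` with `c ⊥ s`, and then `⟨f, ψ^{(i,j)}⟩ = s_j c_i - s_i c_j`. By the
Binet–Cauchy identity the frame sum at a point `x` equals
`|s|² ∑ c_ℓ γ_ℓ(x) - ⟨c, s⟩ ∑ s_ℓ γ_ℓ(x) = f(x)`.
-/

open Finset

theorem Finset.sum_filter_lt_add_swap {ι M : Type*} [Fintype ι] [LinearOrder ι] [AddCommMonoid M]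
    (G : ι × ι → M) (hG : ∀ i, G (i, i) = 0) :
    ∑ p ∈ univ.filter (fun p : ι × ι => p.1 < p.2), (G p + G p.swap) = ∑ p, G p := by
  have hswap : ∑ p : ι × ι, (if p.1 < p.2 then G p.swap else 0)
      = ∑ p : ι × ι, if p.2 < p.1 then G p else 0 :=
    Fintype.sum_equiv (Equiv.prodComm ι ι) _ _ fun _ => rfl
  rw [sum_filter]
  calc _ = ∑ p : ι × ι, (if p.1 < p.2 then G p else 0)
        + ∑ p : ι × ι, (if p.1 < p.2 then G p.swap else 0) := by
        rw [← sum_add_distrib]; simp only [← ite_add_zero]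
    _ = ∑ p, G p := by
        rw [hswap, ← sum_add_distrib]
        refine sum_congr rfl fun ⟨i, j⟩ _ => ?_
        rcases lt_trichotomy i j with h | rfl | h
        · simp [h, h.not_gt]
        · simp [hG]
        · simp [h, h.not_gt]

theorem binet_cauchy_identity {ι R : Type*} [Fintype ι] [LinearOrder ι] [CommRing R]
    (a b c d : ι → R) :
    ∑ p ∈ univ.filter (fun p : ι × ι => p.1 < p.2),
        (a p.1 * b p.2 - a p.2 * b p.1) * (c p.1 * d p.2 - c p.2 * d p.1)
      = (∑ i, a i * c i) * (∑ j, b j * d j) - (∑ i, a i * d i) * (∑ j, b j * c j) := by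
  let G : ι × ι → R := fun p => a p.1 * c p.1 * (b p.2 * d p.2) - a p.1 * d p.1 * (b p.2 * c p.2)
  calc _ = ∑ p ∈ univ.filter (fun p : ι × ι => p.1 < p.2), (G p + G p.swap) :=
        sum_congr rfl fun p _ => by simp only [G, Prod.fst_swap, Prod.snd_swap]; ring
    _ = ∑ p, G p := sum_filter_lt_add_swap G fun i => by simp only [G]; ring
    _ = _ := by
        rw [sum_mul_sum, sum_mul_sum, ← sum_sub_distrib, Fintype.sum_prod_type]
        exact sum_congr rfl fun i _ => by rw [← sum_sub_distrib]

theorem exists_eq_sum_smul_of_mem_span_sub {R M ι : Type*} [CommRing R] [AddCommGroup M]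
    [Module R M] [Fintype ι] (s : ι → R) (v : ι → M) {f : M}
    (hf : f ∈ Submodule.span R (Set.range fun p : ι × ι => s p.2 • v p.1 - s p.1 • v p.2)) :
    ∃ c : ι → R, ∑ i, c i * s i = 0 ∧ f = ∑ i, c i • v i := by
  classical
  suffices h : Submodule.span R (Set.range fun p : ι × ι => s p.2 • v p.1 - s p.1 • v p.2) ≤
      (LinearMap.ker (Fintype.linearCombination R s)).map (Fintype.linearCombination R v) by
    obtain ⟨c, hc, rfl⟩ := h hf
    exact ⟨c, by simpa [Fintype.linearCombination_apply] using hc, rfl⟩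
  rw [Submodule.span_le]
  rintro _ ⟨⟨i, j⟩, rfl⟩
  refine ⟨Pi.single i (s j) - Pi.single j (s i), ?_, ?_⟩
  · simp [mul_comm]
  · simp

section Orthonormal

variable {α ι : Type*} [MeasurableSpace α] {μ : Measure α} [Fintype ι] {γ : ι → α → ℝ}

theorem integral_sum_mul_sub_mul
    (hint : ∀ i j, Integrable (fun x => γ i x * γ j x) μ)
    (hnorm : ∀ i, ∫ x, γ i x * γ i x ∂μ = 1)
    (horth : Pairwise fun i j => ∫ x, γ i x * γ j x ∂μ = 0)
    (c : ι → ℝ) (a b : ℝ) (i j : ι) :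
    ∫ x, (∑ k, c k * γ k x) * (a * γ i x - b * γ j x) ∂μ = a * c i - b * c j := by
  have hint_sum : ∀ l, Integrable (fun x => (∑ k, c k * γ k x) * γ l x) μ := fun l => by
    simp_rw [sum_mul, mul_assoc]
    exact integrable_finsetSum _ fun k _ => (hint k l).const_mul (c k)
  have hcoeff : ∀ l, ∫ x, (∑ k, c k * γ k x) * γ l x ∂μ = c l := fun l => by
    simp_rw [sum_mul, mul_assoc]
    rw [integral_finsetSum _ fun k _ => (hint k l).const_mul (c k)]
    simp_rw [integral_const_mul]
    rw [sum_eq_single l (fun k _ hkl => by rw [horth hkl, mul_zero]) (by simp), hnorm, mul_one]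
  simp_rw [mul_sub, mul_left_comm _ a, mul_left_comm _ b]
  rw [integral_sub ((hint_sum i).const_mul a) ((hint_sum j).const_mul b), integral_const_mul,
    integral_const_mul, hcoeff, hcoeff]

theorem eq_sum_integral_mul_of_mem_span [LinearOrder ι]
    (hint : ∀ i j, Integrable (fun x => γ i x * γ j x) μ)
    (hnorm : ∀ i, ∫ x, γ i x * γ i x ∂μ = 1)
    (horth : Pairwise fun i j => ∫ x, γ i x * γ j x ∂μ = 0)
    {s : ι → ℝ} (hs : ∑ i, s i * s i = 1) {f : α → ℝ}
    (hf : f ∈ Submodule.span ℝ (Set.range fun p : ι × ι => s p.2 • γ p.1 - s p.1 • γ p.2))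
    (x : α) :
    f x = ∑ p ∈ univ.filter (fun p : ι × ι => p.1 < p.2),
      (∫ y, f y * (s p.2 * γ p.1 y - s p.1 * γ p.2 y) ∂μ) *
        (s p.2 * γ p.1 x - s p.1 * γ p.2 x) := by
  obtain ⟨c, hsc, rfl⟩ := exists_eq_sum_smul_of_mem_span_sub s γ hf
  simp only [Finset.sum_apply, Pi.smul_apply, smul_eq_mul]
  simp_rw [integral_sum_mul_sub_mul hint hnorm horth]
  calc ∑ i, c i * γ i x
      = (∑ i, c i * γ i x) * (∑ j, s j * s j) - (∑ i, c i * s i) * (∑ j, s j * γ j x) := by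
        rw [hs, hsc]; ring
    _ = _ := (binet_cauchy_identity c s (fun i => γ i x) s).symm
    _ = _ := sum_congr rfl fun p _ => by ring

end Orthonormal

open Function in
theorem measureReal_iUnion_fintype₀ {α β : Type*} [MeasurableSpace α] {μ : Measure α} [Fintype β]
    {f : β → Set α} (hd : Pairwise (AEDisjoint μ on f)) (h : ∀ i, NullMeasurableSet (f i) μ)
    (h' : ∀ i, μ (f i) ≠ ⊤) :
    μ.real (⋃ b, f b) = ∑ b, μ.real (f b) := by
  simp_rw [measureReal_def, measure_iUnion₀ hd h, tsum_fintype, ENNReal.toReal_sum fun i _ => h' i]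

open Function in
theorem sum_measureReal_div_eq_one {α ι : Type*} [MeasurableSpace α] {μ : Measure α} [Fintype ι]
    {B : Set α} {Bs : ι → Set α} (hBpos : 0 < μ B) (hBfin : μ B ≠ ⊤) (hcover : B = ⋃ ℓ, Bs ℓ)
    (hmeas : ∀ ℓ, NullMeasurableSet (Bs ℓ) μ) (hfin : ∀ ℓ, μ (Bs ℓ) ≠ ⊤)
    (hnull : Pairwise (AEDisjoint μ on Bs)) :
    ∑ ℓ, μ.real (Bs ℓ) / μ.real B = 1 := by
  rw [← sum_div, ← measureReal_iUnion_fintype₀ hnull hmeas hfin, ← hcover]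
  exact div_self (ENNReal.toReal_pos hBpos.ne' hBfin).ne'

section Blocks

variable {d : ℕ}

theorem gammaFn_mul_gammaFn (C D : Set (Fin d → ℝ)) :
    (fun x => gammaFn C x * gammaFn D x) =
      (C ∩ D).indicator fun _ =>
        (Real.sqrt (volume C).toReal)⁻¹ * (Real.sqrt (volume D).toReal)⁻¹ := by
  ext x
  by_cases hC : x ∈ C <;> by_cases hD : x ∈ D <;> simp [gammaFn, hC, hD]

theorem integrable_gammaFn_mul_gammaFn {C D : Set (Fin d → ℝ)} (hC : MeasurableSet C)
    (hD : MeasurableSet D) (hCfin : volume C ≠ ⊤) :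
    Integrable (fun x => gammaFn C x * gammaFn D x) := by
  rw [gammaFn_mul_gammaFn, integrable_indicator_iff (hC.inter hD)]
  exact integrableOn_const (measure_ne_top_of_subset Set.inter_subset_left hCfin)

theorem integral_gammaFn_mul_self {C : Set (Fin d → ℝ)} (hC : MeasurableSet C)
    (hpos : 0 < volume C) (hfin : volume C ≠ ⊤) :
    ∫ x, gammaFn C x * gammaFn C x = 1 := by
  have hreal : 0 < (volume C).toReal := ENNReal.toReal_pos hpos.ne' hfin
  rw [gammaFn_mul_gammaFn, Set.inter_self, integral_indicator_const _ hC, smul_eq_mul,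
    ← mul_inv, Real.mul_self_sqrt hreal.le]
  exact mul_inv_cancel₀ hreal.ne'

theorem integral_gammaFn_mul_of_null_inter {C D : Set (Fin d → ℝ)} (hC : MeasurableSet C)
    (hD : MeasurableSet D) (hnull : volume (C ∩ D) = 0) :
    ∫ x, gammaFn C x * gammaFn D x = 0 := by
  rw [gammaFn_mul_gammaFn, integral_indicator_const _ (hC.inter hD), measureReal_def, hnull,
    ENNReal.toReal_zero, zero_smul]

end Blocks

theorem tight_frame_for_span_of_block_generators_general
    {d m : ℕ} (B : Set (Fin d → ℝ)) (Bs : Fin m → Set (Fin d → ℝ))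
    (hmeas : ∀ ℓ, MeasurableSet (Bs ℓ))
    (hBpos : 0 < volume B) (hBfin : volume B < ⊤)
    (hsub : ∀ ℓ, Bs ℓ ⊆ B) (hcover : B = ⋃ ℓ, Bs ℓ)
    (hpos : ∀ ℓ, 0 < volume (Bs ℓ))
    (hnull : ∀ ℓ₁ ℓ₂, ℓ₁ ≠ ℓ₂ → volume (Bs ℓ₁ ∩ Bs ℓ₂) = 0)
    (f : (Fin d → ℝ) → ℝ)
    (hf : f ∈ Submodule.span ℝ
      (Set.range fun p : {p : Fin m × Fin m // p.1 < p.2} =>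
        psiFn B (Bs p.1.1) (Bs p.1.2))) :
    f =ᵐ[volume] fun x =>
      ∑ p ∈ Finset.univ.filter (fun p : Fin m × Fin m => p.1 < p.2),
        (∫ y, f y * psiFn B (Bs p.1) (Bs p.2) y) * psiFn B (Bs p.1) (Bs p.2) x := by
  set s : Fin m → ℝ := fun ℓ => √((volume (Bs ℓ)).toReal / (volume B).toReal)
  have hfin : ∀ ℓ, volume (Bs ℓ) ≠ ⊤ := fun ℓ => measure_ne_top_of_subset (hsub ℓ) hBfin.ne
  have hs : ∑ ℓ, s ℓ * s ℓ = 1 := by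
    simp only [s, Real.mul_self_sqrt (div_nonneg ENNReal.toReal_nonneg ENNReal.toReal_nonneg)]
    exact sum_measureReal_div_eq_one hBpos hBfin.ne hcover (fun ℓ => (hmeas ℓ).nullMeasurableSet)
      hfin fun i j hij => hnull i j hij
  exact Filter.Eventually.of_forall fun x => eq_sum_integral_mul_of_mem_span
    (γ := fun ℓ => gammaFn (Bs ℓ))
    (fun i j => integrable_gammaFn_mul_gammaFn (hmeas i) (hmeas j) (hfin i))
    (fun i => integral_gammaFn_mul_self (hmeas i) (hpos i) (hfin i))
    (fun i j hij => integral_gammaFn_mul_of_null_inter (hmeas i) (hmeas j) (hnull i j hij)) hs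
    (Submodule.span_mono (Set.range_comp_subset_range Subtype.val _) hf) x

/-- the generators `ψ^{(ℓ₁,ℓ₂)}`, `1 ≤ ℓ₁ < ℓ₂ ≤ m`, form a tight frame
(with frame constant 1) for their linear span `W_B`:
every `f ∈ W_B` satisfies `f = ∑ ⟨f, ψ^{(ℓ₁,ℓ₂)}⟩ ψ^{(ℓ₁,ℓ₂)}` (as elements of `L²(ℝ^d)`). -/
theorem tight_frame_for_span_of_block_generators
    {d m : ℕ} (hm : 2 ≤ m) (B : Set (Fin d → ℝ)) (Bs : Fin m → Set (Fin d → ℝ))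
    (hBmeas : MeasurableSet B) (hmeas : ∀ ℓ, MeasurableSet (Bs ℓ))
    (hBpos : 0 < volume B) (hBfin : volume B < ⊤)
    (hsub : ∀ ℓ, Bs ℓ ⊆ B) (hcover : B = ⋃ ℓ, Bs ℓ)
    (hpos : ∀ ℓ, 0 < volume (Bs ℓ))
    (hnull : ∀ ℓ₁ ℓ₂, ℓ₁ ≠ ℓ₂ → volume (Bs ℓ₁ ∩ Bs ℓ₂) = 0)
    (f : (Fin d → ℝ) → ℝ)
    (hf : f ∈ Submodule.span ℝ
      (Set.range fun p : {p : Fin m × Fin m // p.1 < p.2} =>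
        psiFn B (Bs p.1.1) (Bs p.1.2))) :
    f =ᵐ[volume] fun x =>
      ∑ p ∈ Finset.univ.filter (fun p : Fin m × Fin m => p.1 < p.2),
        (∫ y, f y * psiFn B (Bs p.1) (Bs p.2) y) * psiFn B (Bs p.1) (Bs p.2) x :=
  tight_frame_for_span_of_block_generators_general B Bs hmeas hBpos hBfin hsub hcover hpos hnull f
    hf
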